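/- arXiv:2306.07757 — 3 statements merged into one kernel-verified Lean document; each statement's English description precedes it below -/
import Mathlib

section
/- From heat decay to the parabolic distance: Let d > 2 be a real number and N ≥ 0. There is a constant C = C(d,N) such that for all t ∈ (0,1] and all a ≥ 0, ∫_t^1 s^{−d/2} (1 + a/√s)^{−N−d} ds ≤ C (1+a)^{−N} (√t + a)^{−(d−2)}. -/
/-!
Writing `r = √s`, the integrand is `(r / (r + a)) ^ N * (r + a) ^ (-d)`. For `r ≤ 1` the first
factor is at most `(1 + a) ^ (-N)`, and `(r + a) ^ (-d) ≤ (r + a) ^ (1 - d) / r`, which is the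
`s`-derivative of `2 / (2 - d) * (√s + a) ^ (2 - d)`. As `d > 2` this antiderivative is negative,
so the integral over `[t, 1]` is at most `2 / (d - 2) * (√t + a) ^ (-(d - 2))`.
-/

open MeasureTheory Real Set

theorem rpow_neg_div_two_mul_one_add_div_sqrt_rpow {s : ℝ} (hs : 0 < s) {a : ℝ} (ha : 0 ≤ a)
    (d N : ℝ) :
    s ^ (-d / 2) * (1 + a / √s) ^ (-N - d) = (√s / (√s + a)) ^ N * (√s + a) ^ (-d) := by
  have hr : 0 < √s := sqrt_pos.2 hs
  have hra : 0 < √s + a := by positivity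
  have hsd : s ^ (-d / 2) * √s ^ d = 1 := by
    rw [sqrt_eq_rpow, ← rpow_mul hs.le, ← rpow_add hs, show -d / 2 + 1 / 2 * d = 0 by ring,
      rpow_zero]
  rw [show 1 + a / √s = (√s / (√s + a))⁻¹ by field_simp, inv_rpow (by positivity),
    ← rpow_neg (by positivity), show -(-N - d) = N + d by ring, rpow_add (by positivity),
    div_rpow hr.le hra.le d, div_eq_mul_inv _ ((√s + a) ^ d), ← rpow_neg hra.le]
  linear_combination (√s / (√s + a)) ^ N * (√s + a) ^ (-d) * hsd

theorem div_add_rpow_le_one_add_rpow_neg {r a N : ℝ} (hr : 0 < r) (hr1 : r ≤ 1) (ha : 0 ≤ a)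
    (hN : 0 ≤ N) : (r / (r + a)) ^ N ≤ (1 + a) ^ (-N) := by
  have hle : r / (r + a) ≤ (1 + a)⁻¹ := by
    rw [div_le_iff₀ (by positivity), inv_mul_eq_div, le_div_iff₀ (by positivity)]
    nlinarith
  calc (r / (r + a)) ^ N ≤ (1 + a)⁻¹ ^ N := rpow_le_rpow (by positivity) hle hN
    _ = (1 + a) ^ (-N) := by rw [inv_rpow (by positivity), rpow_neg (by positivity)]

theorem add_rpow_le_add_rpow_add_one_mul_inv {r a : ℝ} (hr : 0 < r) (ha : 0 ≤ a) (q : ℝ) :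
    (r + a) ^ q ≤ (r + a) ^ (q + 1) * r⁻¹ := by
  have hra : 0 < r + a := by positivity
  rw [rpow_add_one hra.ne', mul_assoc]
  refine le_mul_of_one_le_right (by positivity) ?_
  rw [← div_eq_mul_inv, one_le_div hr]
  linarith

theorem heat_integrand_le {s a : ℝ} (hs : 0 < s) (hs1 : s ≤ 1) (ha : 0 ≤ a) (d : ℝ) {N : ℝ}
    (hN : 0 ≤ N) :
    s ^ (-d / 2) * (1 + a / √s) ^ (-N - d) ≤ (1 + a) ^ (-N) * ((√s + a) ^ (-d + 1) * (√s)⁻¹) := by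
  have hr : 0 < √s := sqrt_pos.2 hs
  rw [rpow_neg_div_two_mul_one_add_div_sqrt_rpow hs ha]
  exact mul_le_mul (div_add_rpow_le_one_add_rpow_neg hr (sqrt_le_one.2 hs1) ha hN)
    (add_rpow_le_add_rpow_add_one_mul_inv hr ha _) (by positivity) (by positivity)

theorem hasDerivAt_sqrt_add_rpow {s a p : ℝ} (hs : 0 < s) (ha : 0 ≤ a) (hp : p ≠ 0) :
    HasDerivAt (fun x => 2 / p * (√x + a) ^ p) ((√s + a) ^ (p - 1) * (√s)⁻¹) s := by
  have hr : 0 < √s := sqrt_pos.2 hs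
  refine ((((hasDerivAt_sqrt hs.ne').add_const a).rpow_const
    (Or.inl (by positivity : √s + a ≠ 0))).const_mul (2 / p)).congr_deriv ?_
  field_simp

theorem integral_sqrt_add_rpow_sub_one_mul_inv_sqrt {t u a p : ℝ} (ht : 0 < t) (hu : 0 < u)
    (ha : 0 ≤ a) (hp : p ≠ 0) :
    ∫ s in t..u, (√s + a) ^ (p - 1) * (√s)⁻¹ = 2 / p * ((√u + a) ^ p - (√t + a) ^ p) := by
  have hpos : ∀ s ∈ uIcc t u, 0 < s := fun s hs => (lt_min ht hu).trans_le hs.1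
  rw [mul_sub]
  refine intervalIntegral.integral_eq_sub_of_hasDerivAt
    (fun s hs => hasDerivAt_sqrt_add_rpow (hpos s hs) ha hp) (ContinuousOn.intervalIntegrable ?_)
  fun_prop (disch := intro s hs; have := hpos s hs; positivity)

theorem integral_sqrt_add_rpow_sub_one_mul_inv_sqrt_le {t u a p : ℝ} (ht : 0 < t) (hu : 0 < u)
    (ha : 0 ≤ a) (hp : p < 0) :
    ∫ s in t..u, (√s + a) ^ (p - 1) * (√s)⁻¹ ≤ -2 / p * (√t + a) ^ p := by
  rw [integral_sqrt_add_rpow_sub_one_mul_inv_sqrt ht hu ha hp.ne, mul_sub, neg_div, neg_mul]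
  have : 2 / p * (√u + a) ^ p < 0 :=
    mul_neg_of_neg_of_pos (div_neg_of_pos_of_neg two_pos hp) (by positivity)
  linarith

/-- **From heat decay to the parabolic distance**: for real `d > 2` and `N ≥ 0` there is a
constant `C = C(d,N)` such that for all `t ∈ (0,1]` and all `a ≥ 0`,
`∫_t^1 s^(-d/2) (1 + a/√s)^(-N-d) ds ≤ C (1+a)^(-N) (√t + a)^(-(d-2))`. -/
theorem heat_decay_to_parabolic_distance (d N : ℝ) (hd : 2 < d) (hN : 0 ≤ N) :
    ∃ C : ℝ, 0 < C ∧ ∀ t ∈ Set.Ioc (0 : ℝ) 1, ∀ a : ℝ, 0 ≤ a →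
      (∫ s in t..1, s ^ (-d / 2) * (1 + a / Real.sqrt s) ^ (-N - d))
        ≤ C * (1 + a) ^ (-N) * (Real.sqrt t + a) ^ (-(d - 2)) := by
  refine ⟨2 / (d - 2), div_pos two_pos (by linarith), ?_⟩
  rintro t ⟨ht, ht1⟩ a ha
  have hpos : ∀ s ∈ uIcc t 1, 0 < s := fun s hs => ht.trans_le (uIcc_of_le ht1 ▸ hs).1
  have hexp : -(d - 2) - 1 = -d + 1 := by ring
  calc (∫ s in t..1, s ^ (-d / 2) * (1 + a / √s) ^ (-N - d))
      ≤ ∫ s in t..1, (1 + a) ^ (-N) * ((√s + a) ^ (-(d - 2) - 1) * (√s)⁻¹) := by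
        refine intervalIntegral.integral_mono_on ht1 ?_ ?_ fun s hs => hexp ▸
          heat_integrand_le (ht.trans_le hs.1) hs.2 ha d hN
        all_goals refine ContinuousOn.intervalIntegrable ?_
        all_goals fun_prop (disch := intro s hs; have := hpos s hs; positivity)
    _ = (1 + a) ^ (-N) * ∫ s in t..1, (√s + a) ^ (-(d - 2) - 1) * (√s)⁻¹ :=
        intervalIntegral.integral_const_mul _ _
    _ ≤ (1 + a) ^ (-N) * (-2 / -(d - 2) * (√t + a) ^ (-(d - 2))) := by
        gcongr
        exact integral_sqrt_add_rpow_sub_one_mul_inv_sqrt_le ht one_pos ha (by linarith)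
    _ = 2 / (d - 2) * (1 + a) ^ (-N) * (√t + a) ^ (-(d - 2)) := by rw [neg_div_neg_eq]; ring
end

section
/- Core integral estimate for composing parabolic kernels: Let d ≥ 1, let p, q ∈ (0, d] with p + q ≥ d + 2, and let R > 0, L > 0. There is a constant C = C(d,p,q,R,L) such that for all times t₁ < t₂ in [−L, L] and all x, y ∈ ℝ^d with |x|, |y| ≤ R: if p + q > d + 2, then ∫_{−L}^{t₁} ∫_{|z|≤R} (√(t₂−s) + |x−z|)^{−p} (√(t₁−s) + |z−y|)^{−q} dz ds ≤ C (√(t₂−t₁) + |x−y|)^{−(p+q−d−2)}; and if p + q = d + 2, then the same integral is bounded by C (1 + |log(√(t₂−t₁) + |x−y|)|). -/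
open MeasureTheory Real Set

private lemma rpow_anti {x y r : ℝ} (hx : 0 < x) (hxy : x ≤ y) (hr : 0 ≤ r) :
    y ^ (-r) ≤ x ^ (-r) :=
  Real.rpow_le_rpow_of_nonpos hx hxy (neg_nonpos.2 hr)

private lemma pointwise_bound {p q θ r A B A' σ D : ℝ}
    (hθ1 : 1 ≤ θ) (hθp : θ ≤ p) (hθq : θ ≤ q) (hr : r = p + q - θ)
    (hA' : 0 < A') (hA'A : A' ≤ A) (hσ : 0 ≤ σ) (hB : 0 < B)
    (hD : 0 < D) (hAB : σ + D ≤ A + B) :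
    A ^ (-p) * B ^ (-q) ≤ 2 ^ θ * (σ + D) ^ (-θ) * (A' ^ (-r) + B ^ (-r)) := by
  have hA : 0 < A := lt_of_lt_of_le hA' hA'A
  have hσD : 0 < σ + D := by linarith
  have hr0 : 0 ≤ r := by linarith
  have hkey : ∀ M : ℝ, (σ + D) / 2 ≤ M → M ^ (-θ) ≤ 2 ^ θ * (σ + D) ^ (-θ) := by
    intro M hM
    have h1 : M ^ (-θ) ≤ ((σ + D) / 2) ^ (-θ) := rpow_anti (by linarith) hM (by linarith)
    have h2' : ((σ + D) / 2) ^ (-θ) = 2 ^ θ * (σ + D) ^ (-θ) := by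
      rw [Real.div_rpow hσD.le (by norm_num : (0:ℝ) ≤ 2),
        Real.rpow_neg (by norm_num : (0:ℝ) ≤ 2), div_inv_eq_mul, mul_comm]
    linarith [h2' ▸ h1]
  rcases le_total A B with hcase | hcase
  · have k1 : B ^ (-θ) ≤ 2 ^ θ * (σ + D) ^ (-θ) := hkey B (by linarith)
    have k2 : B ^ (-(q - θ)) ≤ A ^ (-(q - θ)) := rpow_anti hA hcase (by linarith)
    have split : B ^ (-q) = B ^ (-(q - θ)) * B ^ (-θ) := by
      rw [← Real.rpow_add hB]; ring_nf
    have comb : A ^ (-p) * A ^ (-(q - θ)) = A ^ (-r) := by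
      rw [← Real.rpow_add hA, hr]; ring_nf
    have hAr : A ^ (-r) ≤ A' ^ (-r) + B ^ (-r) := by
      have h1 : A ^ (-r) ≤ A' ^ (-r) := rpow_anti hA' hA'A hr0
      have h2 : 0 ≤ B ^ (-r) := Real.rpow_nonneg hB.le _
      linarith
    calc A ^ (-p) * B ^ (-q) = (A ^ (-p) * B ^ (-(q - θ))) * B ^ (-θ) := by rw [split]; ring
      _ ≤ (A ^ (-p) * A ^ (-(q - θ))) * (2 ^ θ * (σ + D) ^ (-θ)) := by
          apply mul_le_mul _ k1 (Real.rpow_nonneg hB.le _) _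
          · exact mul_le_mul_of_nonneg_left k2 (Real.rpow_nonneg hA.le _)
          · positivity
      _ = 2 ^ θ * (σ + D) ^ (-θ) * A ^ (-r) := by rw [comb]; ring
      _ ≤ 2 ^ θ * (σ + D) ^ (-θ) * (A' ^ (-r) + B ^ (-r)) := by
          apply mul_le_mul_of_nonneg_left hAr (by positivity)
  · have k1 : A ^ (-θ) ≤ 2 ^ θ * (σ + D) ^ (-θ) := hkey A (by linarith)
    have k2 : A ^ (-(p - θ)) ≤ B ^ (-(p - θ)) := rpow_anti hB hcase (by linarith)
    have split : A ^ (-p) = A ^ (-(p - θ)) * A ^ (-θ) := by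
      rw [← Real.rpow_add hA]; ring_nf
    have comb : B ^ (-(p - θ)) * B ^ (-q) = B ^ (-r) := by
      rw [← Real.rpow_add hB, hr]; ring_nf
    have hBr : B ^ (-r) ≤ A' ^ (-r) + B ^ (-r) := by
      have h2 : 0 ≤ A' ^ (-r) := Real.rpow_nonneg hA'.le _
      linarith
    calc A ^ (-p) * B ^ (-q) = (A ^ (-(p - θ)) * B ^ (-q)) * A ^ (-θ) := by rw [split]; ring
      _ ≤ (B ^ (-(p - θ)) * B ^ (-q)) * (2 ^ θ * (σ + D) ^ (-θ)) := by
          apply mul_le_mul _ k1 (Real.rpow_nonneg hA.le _) _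
          · exact mul_le_mul_of_nonneg_right k2 (Real.rpow_nonneg hB.le _)
          · positivity
      _ = 2 ^ θ * (σ + D) ^ (-θ) * B ^ (-r) := by rw [comb]; ring
      _ ≤ 2 ^ θ * (σ + D) ^ (-θ) * (A' ^ (-r) + B ^ (-r)) := by
          apply mul_le_mul_of_nonneg_left hBr (by positivity)

private lemma integrable_aux (d : ℕ) :
    Integrable (fun v : EuclideanSpace ℝ (Fin d) => (1 + ‖v‖) ^ (-((d:ℝ) + 1))) := by
  apply integrable_one_add_norm
  rw [finrank_euclideanSpace_fin]
  linarith

private lemma scaled_fun_eq {d : ℕ} {σ : ℝ} (hσ : 0 < σ) :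
    (fun w : EuclideanSpace ℝ (Fin d) => (σ + ‖w‖) ^ (-((d:ℝ) + 1))) =
      fun w => σ ^ (-((d:ℝ) + 1)) * (1 + ‖σ⁻¹ • w‖) ^ (-((d:ℝ) + 1)) := by
  funext w
  have h1 : ‖σ⁻¹ • w‖ = σ⁻¹ * ‖w‖ := by
    rw [norm_smul, Real.norm_eq_abs, abs_of_pos (inv_pos.2 hσ)]
  rw [h1, ← Real.mul_rpow hσ.le (by positivity)]
  congr 1
  field_simp

private lemma scaled_integrable {d : ℕ} {σ : ℝ} (hσ : 0 < σ) :
    Integrable (fun w : EuclideanSpace ℝ (Fin d) => (σ + ‖w‖) ^ (-((d:ℝ) + 1))) := by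
  rw [scaled_fun_eq hσ]
  exact ((integrable_comp_smul_iff volume
    (fun v : EuclideanSpace ℝ (Fin d) => (1 + ‖v‖) ^ (-((d:ℝ) + 1)))
    (inv_ne_zero hσ.ne')).2 (integrable_aux d)).const_mul _

private lemma scaled_integral {d : ℕ} {σ : ℝ} (hσ : 0 < σ) :
    ∫ w : EuclideanSpace ℝ (Fin d), (σ + ‖w‖) ^ (-((d:ℝ) + 1)) =
      σ⁻¹ * ∫ v : EuclideanSpace ℝ (Fin d), (1 + ‖v‖) ^ (-((d:ℝ) + 1)) := by
  rw [scaled_fun_eq hσ, integral_const_mul,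
    Measure.integral_comp_inv_smul volume
      (fun v : EuclideanSpace ℝ (Fin d) => (1 + ‖v‖) ^ (-((d:ℝ) + 1))) σ]
  rw [finrank_euclideanSpace_fin, abs_of_nonneg (pow_nonneg hσ.le _), smul_eq_mul, ← mul_assoc]
  congr 1
  rw [← Real.rpow_natCast σ d, ← Real.rpow_add hσ, ← Real.rpow_neg_one σ]
  congr 1
  ring

private lemma ball_integral_le {d : ℕ} {σ R : ℝ} (hσ : 0 < σ)
    (c : EuclideanSpace ℝ (Fin d)) :
    ∫ z in Metric.closedBall (0 : EuclideanSpace ℝ (Fin d)) R, (σ + ‖z - c‖) ^ (-((d:ℝ) + 1))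
      ≤ σ⁻¹ * ∫ v : EuclideanSpace ℝ (Fin d), (1 + ‖v‖) ^ (-((d:ℝ) + 1)) := by
  have hint : Integrable (fun z : EuclideanSpace ℝ (Fin d) => (σ + ‖z - c‖) ^ (-((d:ℝ) + 1))) :=
    (scaled_integrable hσ).comp_sub_right c
  calc ∫ z in Metric.closedBall (0 : EuclideanSpace ℝ (Fin d)) R, (σ + ‖z - c‖) ^ (-((d:ℝ) + 1))
      ≤ ∫ z : EuclideanSpace ℝ (Fin d), (σ + ‖z - c‖) ^ (-((d:ℝ) + 1)) :=
        setIntegral_le_integral hint (ae_of_all _ fun z => Real.rpow_nonneg (by positivity) _)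
    _ = ∫ w : EuclideanSpace ℝ (Fin d), (σ + ‖w‖) ^ (-((d:ℝ) + 1)) :=
        integral_sub_right_eq_self (fun w => (σ + ‖w‖) ^ (-((d:ℝ) + 1))) c
    _ = σ⁻¹ * ∫ v : EuclideanSpace ℝ (Fin d), (1 + ‖v‖) ^ (-((d:ℝ) + 1)) := scaled_integral hσ

private lemma sqrt_integrand_integrable {a b D θ : ℝ} (hab : a < b) (hD : 0 < D) (hθ : 1 ≤ θ) :
    IntervalIntegrable (fun s => (Real.sqrt (b - s) + D) ^ (-θ) * (Real.sqrt (b - s))⁻¹)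
      volume a b := by
  have hg0 : IntervalIntegrable (fun x : ℝ => x ^ (-(1/2 : ℝ))) volume 0 (b - a) :=
    intervalIntegral.intervalIntegrable_rpow' (by norm_num)
  have hg1 : IntervalIntegrable (fun s : ℝ => (b - s) ^ (-(1/2 : ℝ))) volume a b := by
    have := hg0.comp_sub_left b
    simpa using this.symm
  have hg : IntervalIntegrable (fun s : ℝ => D ^ (-θ) * (b - s) ^ (-(1/2 : ℝ))) volume a b :=
    hg1.const_mul _
  apply hg.mono_fun'
  · have c1 : Continuous fun s : ℝ => (Real.sqrt (b - s) + D) ^ (-θ) := by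
      apply Continuous.rpow_const
      · exact ((continuous_const.sub continuous_id).sqrt).add continuous_const
      · intro s
        left
        positivity
    have m2 : Measurable fun s : ℝ => (Real.sqrt (b - s))⁻¹ :=
      ((continuous_const.sub continuous_id).sqrt.measurable).inv
    exact (c1.measurable.mul m2).aestronglyMeasurable
  · rw [Filter.EventuallyLE, ae_restrict_iff' measurableSet_uIoc]
    apply ae_of_all
    intro s hs
    rw [uIoc_of_le hab.le] at hs
    have hbs : 0 ≤ b - s := by linarith [hs.2]
    have h1 : (Real.sqrt (b - s))⁻¹ = (b - s) ^ (-(1/2 : ℝ)) := by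
      rw [Real.sqrt_eq_rpow, ← Real.rpow_neg hbs]
    have h2 : (Real.sqrt (b - s) + D) ^ (-θ) ≤ D ^ (-θ) :=
      Real.rpow_le_rpow_of_nonpos hD (by linarith [Real.sqrt_nonneg (b - s)]) (by linarith)
    rw [Real.norm_eq_abs, abs_of_nonneg (by positivity)]
    rw [h1]
    apply mul_le_mul_of_nonneg_right h2 (Real.rpow_nonneg hbs _)

private lemma sqrt_deriv_aux {b D : ℝ} {s : ℝ} (hbs : 0 < b - s) :
    HasDerivAt (fun s => Real.sqrt (b - s) + D) (1 / (2 * Real.sqrt (b - s)) * (-1)) s := by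
  have h1 : HasDerivAt (fun s : ℝ => b - s) (-1) s := by
    simpa using (hasDerivAt_id s).const_sub b
  exact ((Real.hasDerivAt_sqrt hbs.ne').comp s h1).add_const D

private lemma sqrt_integral_log {a b D : ℝ} (hab : a < b) (hD : 0 < D) :
    (∫ s in a..b, (Real.sqrt (b - s) + D) ^ (-(1:ℝ)) * (Real.sqrt (b - s))⁻¹)
      ≤ 2 * (Real.log (Real.sqrt (b - a) + D) - Real.log D) := by
  set F : ℝ → ℝ := fun s => -2 * Real.log (Real.sqrt (b - s) + D) with hF
  have hcu : Continuous fun s : ℝ => Real.sqrt (b - s) + D :=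
    ((continuous_const.sub continuous_id).sqrt).add continuous_const
  have hcont : ContinuousOn F (Icc a b) := by
    apply ContinuousOn.mul continuousOn_const
    apply ContinuousOn.log hcu.continuousOn
    intro s _
    positivity
  have hderiv : ∀ s ∈ Ioo a b,
      HasDerivWithinAt F ((Real.sqrt (b - s) + D) ^ (-(1:ℝ)) * (Real.sqrt (b - s))⁻¹) (Ioi s) s := by
    intro s hs
    have hbs : 0 < b - s := by linarith [hs.2]
    have hsq : 0 < Real.sqrt (b - s) := Real.sqrt_pos.2 hbs
    have hu : 0 < Real.sqrt (b - s) + D := by positivity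
    have h := ((Real.hasDerivAt_log hu.ne').comp s (sqrt_deriv_aux hbs)).const_mul (-2 : ℝ)
    have heq : -2 * ((Real.sqrt (b - s) + D)⁻¹ * (1 / (2 * Real.sqrt (b - s)) * (-1))) =
        (Real.sqrt (b - s) + D) ^ (-(1:ℝ)) * (Real.sqrt (b - s))⁻¹ := by
      rw [Real.rpow_neg_one]
      field_simp
    rw [heq] at h
    exact h.hasDerivWithinAt
  have hint := sqrt_integrand_integrable hab hD (le_refl (1:ℝ))
  have := intervalIntegral.integral_eq_sub_of_hasDeriv_right_of_le hab.le hcont hderiv hint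
  rw [this, hF]
  simp only [sub_self, Real.sqrt_zero, zero_add]
  ring_nf
  linarith

private lemma sqrt_integral_rpow {a b D θ : ℝ} (hab : a < b) (hD : 0 < D) (hθ : 1 < θ) :
    (∫ s in a..b, (Real.sqrt (b - s) + D) ^ (-θ) * (Real.sqrt (b - s))⁻¹)
      ≤ (2 / (θ - 1)) * D ^ (1 - θ) := by
  set F : ℝ → ℝ := fun s => (2 / (θ - 1)) * (Real.sqrt (b - s) + D) ^ (1 - θ) with hF
  have hcu : Continuous fun s : ℝ => Real.sqrt (b - s) + D :=
    ((continuous_const.sub continuous_id).sqrt).add continuous_const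
  have hcont : ContinuousOn F (Icc a b) := by
    apply ContinuousOn.mul continuousOn_const
    apply ContinuousOn.rpow_const hcu.continuousOn
    intro s _
    left
    positivity
  have hderiv : ∀ s ∈ Ioo a b,
      HasDerivWithinAt F ((Real.sqrt (b - s) + D) ^ (-θ) * (Real.sqrt (b - s))⁻¹) (Ioi s) s := by
    intro s hs
    have hbs : 0 < b - s := by linarith [hs.2]
    have hsq : 0 < Real.sqrt (b - s) := Real.sqrt_pos.2 hbs
    have hu : 0 < Real.sqrt (b - s) + D := by positivity
    have hrp : HasDerivAt (fun y : ℝ => y ^ (1 - θ))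
        ((1 - θ) * (Real.sqrt (b - s) + D) ^ (1 - θ - 1)) (Real.sqrt (b - s) + D) :=
      Real.hasDerivAt_rpow_const (Or.inl hu.ne')
    have h := (hrp.comp s (sqrt_deriv_aux hbs)).const_mul (2 / (θ - 1) : ℝ)
    have hexp : (1 - θ - 1) = -θ := by ring
    rw [hexp] at h
    have heq : 2 / (θ - 1) * ((1 - θ) * (Real.sqrt (b - s) + D) ^ (-θ) *
        (1 / (2 * Real.sqrt (b - s)) * (-1))) =
        (Real.sqrt (b - s) + D) ^ (-θ) * (Real.sqrt (b - s))⁻¹ := by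
      have hθ0 : θ - 1 ≠ 0 := by linarith
      field_simp
      ring
    rw [heq] at h
    exact h.hasDerivWithinAt
  have hint := sqrt_integrand_integrable hab hD hθ.le
  have := intervalIntegral.integral_eq_sub_of_hasDeriv_right_of_le hab.le hcont hderiv hint
  rw [this, hF]
  simp only [sub_self, Real.sqrt_zero, zero_add]
  have h1 : 0 ≤ (Real.sqrt (b - a) + D) ^ (1 - θ) := Real.rpow_nonneg (by positivity) _
  have h2 : 0 < 2 / (θ - 1) := div_pos two_pos (by linarith)
  nlinarith

open MeasureTheory

set_option maxHeartbeats 2000000 in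
/-- **Core integral estimate for composing parabolic kernels**: for `p, q ∈ (0, d]` with
`p + q ≥ d + 2`, and `R, L > 0`, there is `C = C(d,p,q,R,L)` such that for all times
`t₁ < t₂` in `[-L, L]` and all `|x|, |y| ≤ R`:
if `p + q > d + 2` then
`∫_{-L}^{t₁} ∫_{|z| ≤ R} (√(t₂-s)+|x-z|)^(-p) (√(t₁-s)+|z-y|)^(-q) dz ds
  ≤ C (√(t₂-t₁)+|x-y|)^(-(p+q-d-2))`,
and if `p + q = d + 2` the same integral is `≤ C (1 + |log(√(t₂-t₁)+|x-y|)|)`. -/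
theorem parabolic_composition_integral (d : ℕ) (hd : 1 ≤ d) (p q R L : ℝ)
    (hp : p ∈ Set.Ioc (0 : ℝ) (d : ℝ)) (hq : q ∈ Set.Ioc (0 : ℝ) (d : ℝ))
    (hpq : (d : ℝ) + 2 ≤ p + q) (hR : 0 < R) (hL : 0 < L) :
    ∃ C : ℝ, 0 < C ∧
      ∀ t₁ t₂ : ℝ, t₁ < t₂ → t₁ ∈ Set.Icc (-L) L → t₂ ∈ Set.Icc (-L) L →
      ∀ x y : EuclideanSpace ℝ (Fin d), ‖x‖ ≤ R → ‖y‖ ≤ R →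
        (((d : ℝ) + 2 < p + q →
          (∫ s in (-L)..t₁, ∫ z in Metric.closedBall (0 : EuclideanSpace ℝ (Fin d)) R,
              (Real.sqrt (t₂ - s) + ‖x - z‖) ^ (-p) *
                (Real.sqrt (t₁ - s) + ‖z - y‖) ^ (-q))
            ≤ C * (Real.sqrt (t₂ - t₁) + ‖x - y‖) ^ (-(p + q - (d : ℝ) - 2))) ∧
        (p + q = (d : ℝ) + 2 →
          (∫ s in (-L)..t₁, ∫ z in Metric.closedBall (0 : EuclideanSpace ℝ (Fin d)) R,
              (Real.sqrt (t₂ - s) + ‖x - z‖) ^ (-p) *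
                (Real.sqrt (t₁ - s) + ‖z - y‖) ^ (-q))
            ≤ C * (1 + |Real.log (Real.sqrt (t₂ - t₁) + ‖x - y‖)|))) := by
  obtain ⟨hp0, hpd⟩ := hp
  obtain ⟨hq0, hqd⟩ := hq
  set θ : ℝ := p + q - (d : ℝ) - 1 with hθdef
  have hθ1 : 1 ≤ θ := by simp only [hθdef]; linarith
  have hθp : θ ≤ p := by simp only [hθdef]; linarith
  have hθq : θ ≤ q := by simp only [hθdef]; linarith
  set K : ℝ := ∫ v : EuclideanSpace ℝ (Fin d), (1 + ‖v‖) ^ (-((d : ℝ) + 1)) with hKdef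
  have hK0 : 0 ≤ K := integral_nonneg fun v => Real.rpow_nonneg (by positivity) _
  set Cg : ℝ := 2 ^ θ * (2 * K) with hCgdef
  have hCg0 : 0 ≤ Cg := by positivity
  set Dmax : ℝ := Real.sqrt (2 * L) + 2 * R with hDmaxdef
  set M₀ : ℝ := |Real.log (Real.sqrt (2 * L) + Dmax)| with hM0def
  have hM00 : 0 ≤ M₀ := abs_nonneg _
  set C : ℝ := Cg * (2 * (1 + M₀)) + (if 1 < θ then Cg * (2 / (θ - 1)) else 0) + 1 with hCdef
  have hite0 : 0 ≤ (if 1 < θ then Cg * (2 / (θ - 1)) else 0) := by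
    split
    · next h => exact mul_nonneg hCg0 (le_of_lt (div_pos two_pos (by linarith)))
    · exact le_refl 0
  have hterm1 : 0 ≤ Cg * (2 * (1 + M₀)) := by positivity
  have hC : 0 < C := by rw [hCdef]; linarith
  refine ⟨C, hC, ?_⟩
  intro t₁ t₂ hlt ht₁ ht₂ x y hx hy
  set D : ℝ := Real.sqrt (t₂ - t₁) + ‖x - y‖ with hDdef
  have hD : 0 < D :=
    add_pos_of_pos_of_nonneg (Real.sqrt_pos.2 (by linarith)) (norm_nonneg _)
  have hDmax : D ≤ Dmax := by
    rw [hDdef, hDmaxdef]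
    have h1 : Real.sqrt (t₂ - t₁) ≤ Real.sqrt (2 * L) :=
      Real.sqrt_le_sqrt (by linarith [ht₁.1, ht₂.2])
    have h2 : ‖x - y‖ ≤ 2 * R := le_trans (norm_sub_le x y) (by linarith)
    linarith
  rcases eq_or_lt_of_le ht₁.1 with hal | hal
  · -- degenerate case t₁ = -L
    rw [← hal]
    simp only [intervalIntegral.integral_same]
    constructor
    · intro _
      positivity
    · intro _
      positivity
  · -- main case -L < t₁
    have hinner : ∀ s ∈ Set.Ioo (-L) t₁,
        (∫ z in Metric.closedBall (0 : EuclideanSpace ℝ (Fin d)) R,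
            (Real.sqrt (t₂ - s) + ‖x - z‖) ^ (-p) * (Real.sqrt (t₁ - s) + ‖z - y‖) ^ (-q))
          ≤ Cg * ((Real.sqrt (t₁ - s) + D) ^ (-θ) * (Real.sqrt (t₁ - s))⁻¹) := by
      intro s hs
      have hst : 0 < t₁ - s := by linarith [hs.2]
      have hσ : 0 < Real.sqrt (t₁ - s) := Real.sqrt_pos.2 hst
      have hptwise : ∀ z : EuclideanSpace ℝ (Fin d),
          (Real.sqrt (t₂ - s) + ‖x - z‖) ^ (-p) * (Real.sqrt (t₁ - s) + ‖z - y‖) ^ (-q) ≤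
          2 ^ θ * (Real.sqrt (t₁ - s) + D) ^ (-θ) *
            ((Real.sqrt (t₁ - s) + ‖z - x‖) ^ (-((d : ℝ) + 1)) +
              (Real.sqrt (t₁ - s) + ‖z - y‖) ^ (-((d : ℝ) + 1))) := by
        intro z
        apply pointwise_bound hθ1 hθp hθq (by simp only [hθdef]; ring)
          (by positivity)
          (by
            rw [norm_sub_rev z x]
            have : Real.sqrt (t₁ - s) ≤ Real.sqrt (t₂ - s) := Real.sqrt_le_sqrt (by linarith)
            linarith)
          hσ.le (by positivity) hD
        -- σ + D ≤ A + B
        have h1 : Real.sqrt (t₂ - t₁) ≤ Real.sqrt (t₂ - s) :=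
          Real.sqrt_le_sqrt (by linarith [hs.2])
        have h2 : ‖x - y‖ ≤ ‖x - z‖ + ‖z - y‖ := by
          have := dist_triangle x z y
          simpa [dist_eq_norm] using this
        rw [hDdef]
        linarith
      have hint1 : Integrable
          (fun z : EuclideanSpace ℝ (Fin d) =>
            (Real.sqrt (t₁ - s) + ‖z - x‖) ^ (-((d : ℝ) + 1))) :=
        (scaled_integrable hσ).comp_sub_right x
      have hint2 : Integrable
          (fun z : EuclideanSpace ℝ (Fin d) =>
            (Real.sqrt (t₁ - s) + ‖z - y‖) ^ (-((d : ℝ) + 1))) :=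
        (scaled_integrable hσ).comp_sub_right y
      calc (∫ z in Metric.closedBall (0 : EuclideanSpace ℝ (Fin d)) R,
            (Real.sqrt (t₂ - s) + ‖x - z‖) ^ (-p) * (Real.sqrt (t₁ - s) + ‖z - y‖) ^ (-q))
          ≤ ∫ z in Metric.closedBall (0 : EuclideanSpace ℝ (Fin d)) R,
            2 ^ θ * (Real.sqrt (t₁ - s) + D) ^ (-θ) *
              ((Real.sqrt (t₁ - s) + ‖z - x‖) ^ (-((d : ℝ) + 1)) +
                (Real.sqrt (t₁ - s) + ‖z - y‖) ^ (-((d : ℝ) + 1))) := by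
            apply integral_mono_of_nonneg
            · exact ae_of_all _ fun z => by positivity
            · exact (((hint1.add hint2).const_mul _).integrableOn)
            · exact ae_of_all _ hptwise
        _ = 2 ^ θ * (Real.sqrt (t₁ - s) + D) ^ (-θ) *
              ((∫ z in Metric.closedBall (0 : EuclideanSpace ℝ (Fin d)) R,
                  (Real.sqrt (t₁ - s) + ‖z - x‖) ^ (-((d : ℝ) + 1))) +
                ∫ z in Metric.closedBall (0 : EuclideanSpace ℝ (Fin d)) R,
                  (Real.sqrt (t₁ - s) + ‖z - y‖) ^ (-((d : ℝ) + 1))) := by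
            rw [integral_const_mul, integral_add (hint1.integrableOn) (hint2.integrableOn)]
        _ ≤ 2 ^ θ * (Real.sqrt (t₁ - s) + D) ^ (-θ) *
              (((Real.sqrt (t₁ - s))⁻¹ * K) + ((Real.sqrt (t₁ - s))⁻¹ * K)) := by
            apply mul_le_mul_of_nonneg_left
              (add_le_add (ball_integral_le hσ x) (ball_integral_le hσ y)) (by positivity)
        _ = Cg * ((Real.sqrt (t₁ - s) + D) ^ (-θ) * (Real.sqrt (t₁ - s))⁻¹) := by
            rw [hCgdef]; ring
    have hJint : IntervalIntegrable
        (fun s => (Real.sqrt (t₁ - s) + D) ^ (-θ) * (Real.sqrt (t₁ - s))⁻¹) volume (-L) t₁ :=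
      sqrt_integrand_integrable hal hD hθ1
    have key : (∫ s in (-L)..t₁, ∫ z in Metric.closedBall (0 : EuclideanSpace ℝ (Fin d)) R,
            (Real.sqrt (t₂ - s) + ‖x - z‖) ^ (-p) * (Real.sqrt (t₁ - s) + ‖z - y‖) ^ (-q))
        ≤ Cg * ∫ s in (-L)..t₁,
            (Real.sqrt (t₁ - s) + D) ^ (-θ) * (Real.sqrt (t₁ - s))⁻¹ := by
      rw [intervalIntegral.integral_of_le hal.le, intervalIntegral.integral_of_le hal.le,
        ← integral_const_mul, integral_Ioc_eq_integral_Ioo, integral_Ioc_eq_integral_Ioo]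
      apply integral_mono_of_nonneg
      · exact ae_of_all _ fun s => integral_nonneg fun z => by positivity
      · exact (((hJint.const_mul Cg).1).mono_set Set.Ioo_subset_Ioc_self)
      · rw [Filter.EventuallyLE, ae_restrict_iff' measurableSet_Ioo]
        exact ae_of_all _ hinner
    constructor
    · intro hstrict
      have hθgt : 1 < θ := by simp only [hθdef]; linarith
      have hJ := sqrt_integral_rpow hal hD hθgt
      have hD1 : D ^ ((1 : ℝ) - θ) = D ^ (-(p + q - (d : ℝ) - 2)) := by
        congr 1
        simp only [hθdef]; ring
      calc (∫ s in (-L)..t₁, ∫ z in Metric.closedBall (0 : EuclideanSpace ℝ (Fin d)) R,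
            (Real.sqrt (t₂ - s) + ‖x - z‖) ^ (-p) * (Real.sqrt (t₁ - s) + ‖z - y‖) ^ (-q))
          ≤ Cg * ∫ s in (-L)..t₁,
              (Real.sqrt (t₁ - s) + D) ^ (-θ) * (Real.sqrt (t₁ - s))⁻¹ := key
        _ ≤ Cg * ((2 / (θ - 1)) * D ^ ((1:ℝ) - θ)) := mul_le_mul_of_nonneg_left hJ hCg0
        _ = (Cg * (2 / (θ - 1))) * D ^ (-(p + q - (d : ℝ) - 2)) := by rw [hD1]; ring
        _ ≤ C * D ^ (-(p + q - (d : ℝ) - 2)) := by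
            apply mul_le_mul_of_nonneg_right _ (Real.rpow_nonneg hD.le _)
            rw [hCdef, if_pos hθgt]
            linarith
    · intro heq
      have hθeq : θ = 1 := by simp only [hθdef]; linarith
      have hJ := sqrt_integral_log hal hD
      rw [← hθeq] at hJ
      have hblog : Real.log (Real.sqrt (t₁ - (-L)) + D) ≤ M₀ := by
        have harg : Real.sqrt (t₁ - (-L)) + D ≤ Real.sqrt (2 * L) + Dmax := by
          have h1 : Real.sqrt (t₁ - (-L)) ≤ Real.sqrt (2 * L) :=
            Real.sqrt_le_sqrt (by linarith [ht₁.2])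
          linarith
        calc Real.log (Real.sqrt (t₁ - (-L)) + D)
            ≤ Real.log (Real.sqrt (2 * L) + Dmax) := Real.log_le_log (by positivity) harg
          _ ≤ M₀ := le_abs_self _
      have hlogD : -Real.log D ≤ |Real.log D| := neg_le_abs _
      have hJ2 : (∫ s in (-L)..t₁, (Real.sqrt (t₁ - s) + D) ^ (-θ) * (Real.sqrt (t₁ - s))⁻¹)
          ≤ 2 * (1 + M₀) * (1 + |Real.log D|) := by
        have habs : 0 ≤ |Real.log D| := abs_nonneg _
        have h2 : 2 * (M₀ + |Real.log D|) ≤ 2 * (1 + M₀) * (1 + |Real.log D|) := by nlinarith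
        calc (∫ s in (-L)..t₁, (Real.sqrt (t₁ - s) + D) ^ (-θ) * (Real.sqrt (t₁ - s))⁻¹)
            ≤ 2 * (Real.log (Real.sqrt (t₁ - (-L)) + D) - Real.log D) := hJ
          _ ≤ 2 * (M₀ + |Real.log D|) := by linarith
          _ ≤ 2 * (1 + M₀) * (1 + |Real.log D|) := h2
      calc (∫ s in (-L)..t₁, ∫ z in Metric.closedBall (0 : EuclideanSpace ℝ (Fin d)) R,
            (Real.sqrt (t₂ - s) + ‖x - z‖) ^ (-p) * (Real.sqrt (t₁ - s) + ‖z - y‖) ^ (-q))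
          ≤ Cg * ∫ s in (-L)..t₁,
              (Real.sqrt (t₁ - s) + D) ^ (-θ) * (Real.sqrt (t₁ - s))⁻¹ := key
        _ ≤ Cg * (2 * (1 + M₀) * (1 + |Real.log D|)) := mul_le_mul_of_nonneg_left hJ2 hCg0
        _ = (Cg * (2 * (1 + M₀))) * (1 + |Real.log D|) := by ring
        _ ≤ C * (1 + |Real.log D|) := by
            apply mul_le_mul_of_nonneg_right _ (by positivity)
            rw [hCdef]
            linarith
end

section
/- Magic identity for the derivative of the matrix exponential at a symmetric matrix: Let n ≥ 1, let M ∈ M_n(ℝ) be a symmetric matrix (Mᵀ = M) and let V ∈ ℝ^n. Then for every index a ∈ {1,…,n}, ∑_{b,d=1}^n (D exp(M)[E_{bd}])_{ab} · V_d = (exp(M)·V)_a, where exp is the matrix exponential, D exp(M)[H] denotes the Fréchet derivative of exp at M in the direction H (equivalently, the derivative at ε = 0 of ε ↦ exp(M + εH)), and E_{bd} is the elementary matrix with entry 1 at position (b,d) and 0 elsewhere. -/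
/-
Because `E_{bd}` has a single nonzero entry, `(Mⁱ E_{bd} Mʲ)_{ab} = (Mⁱ)_{ab} (Mʲ)_{db}`, so summing
over `b` gives `(Mⁱ (Mʲ)ᵀ)_{ad}`, which is `(Mⁱ⁺ʲ)_{ad}` when `M` is symmetric. Each of the `k + 1`
terms of the `k`-th summand of `D exp(M)` thus contributes `(Mᵏ)_{ad}`, and
`(k + 1) / (k + 1)! = 1 / k!` turns the series into that of `exp(M)_{ad}`. Exchanging the sum
over `b` with the series is legitimate because `‖Mⁱ H Mᵏ⁻ⁱ‖ ≤ ‖M‖ᵏ ‖H‖` for a submultiplicative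
norm, which makes the derivative series converge absolutely.
-/

noncomputable section

/-- The matrix exponential `exp(M) = ∑_{k ≥ 0} M^k / k!`. -/
def matExp (n : ℕ) (M : Matrix (Fin n) (Fin n) ℝ) : Matrix (Fin n) (Fin n) ℝ :=
  ∑' k : ℕ, ((k.factorial : ℝ))⁻¹ • M ^ k

/-- The Fréchet derivative of the matrix exponential at `M` in direction `H`:
`D exp(M)[H] = ∑_{k ≥ 0} (1/(k+1)!) ∑_{i=0}^k M^i H M^(k-i)`. -/
def matExpDeriv (n : ℕ) (M H : Matrix (Fin n) (Fin n) ℝ) : Matrix (Fin n) (Fin n) ℝ :=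
  ∑' k : ℕ, (((k + 1).factorial : ℝ))⁻¹ •
    ∑ i ∈ Finset.range (k + 1), M ^ i * H * M ^ (k - i)

open Finset

section BanachAlgebra

variable {A : Type*} [NormedRing A] [NormOneClass A]

theorem norm_sum_pow_mul_mul_pow_le (x h : A) (k : ℕ) :
    ‖∑ i ∈ range (k + 1), x ^ i * h * x ^ (k - i)‖ ≤ (k + 1) * (‖x‖ ^ k * ‖h‖) := by
  have hterm : ∀ i ∈ range (k + 1), ‖x ^ i * h * x ^ (k - i)‖ ≤ ‖x‖ ^ k * ‖h‖ := by
    intro i hi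
    calc ‖x ^ i * h * x ^ (k - i)‖ ≤ ‖x‖ ^ i * ‖h‖ * ‖x‖ ^ (k - i) := by
          refine (norm_mul_le _ _).trans ?_
          gcongr
          · exact (norm_mul_le _ _).trans (by gcongr; exact norm_pow_le x i)
          · exact norm_pow_le x _
      _ = ‖x‖ ^ k * ‖h‖ := by
          rw [mul_right_comm, ← pow_add, Nat.add_sub_cancel' (mem_range_succ_iff.mp hi)]
  calc _ ≤ ∑ i ∈ range (k + 1), ‖x ^ i * h * x ^ (k - i)‖ := norm_sum_le _ _
    _ ≤ ∑ i ∈ range (k + 1), ‖x‖ ^ k * ‖h‖ := sum_le_sum hterm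
    _ = (k + 1) * (‖x‖ ^ k * ‖h‖) := by simp

variable [NormedAlgebra ℝ A] [CompleteSpace A]

theorem summable_expDeriv_series (x h : A) :
    Summable fun k : ℕ => (((k + 1).factorial : ℝ))⁻¹ •
      ∑ i ∈ range (k + 1), x ^ i * h * x ^ (k - i) := by
  refine .of_norm_bounded ((Real.summable_pow_div_factorial ‖x‖).mul_right ‖h‖) fun k => ?_
  rw [norm_smul, Real.norm_of_nonneg (by positivity)]
  calc _ ≤ (((k + 1).factorial : ℝ))⁻¹ * ((k + 1) * (‖x‖ ^ k * ‖h‖)) := by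
        gcongr; exact norm_sum_pow_mul_mul_pow_le x h k
    _ = ‖x‖ ^ k / k.factorial * ‖h‖ := by
        rw [Nat.factorial_succ]; push_cast; field_simp

end BanachAlgebra

namespace Matrix

variable {l m n o α : Type*} [Fintype m] [Fintype n] [DecidableEq m] [DecidableEq n]

theorem mul_single_mul_apply [NonUnitalNonAssocSemiring α] (A : Matrix l m α) (B : Matrix n o α)
    (p : m) (q : n) (c : α) (x : l) (y : o) :
    (A * single p q c * B) x y = A x p * c * B q y := by
  simp [mul_apply, single, ite_and]

theorem sum_mul_single_one_mul_apply_self [NonAssocSemiring α] (A : Matrix l m α)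
    (B : Matrix n m α) (a : l) (d : n) :
    ∑ b : m, (A * single b d (1 : α) * B) a b = (A * Bᵀ) a d := by
  simp only [mul_single_mul_apply, mul_one]
  rfl

variable [CommSemiring α] {M : Matrix m m α}

theorem sum_pow_mul_single_one_mul_pow_apply_self (hM : Mᵀ = M) (i j : ℕ) (a d : m) :
    ∑ b : m, (M ^ i * single b d (1 : α) * M ^ j) a b = (M ^ (i + j)) a d := by
  rw [sum_mul_single_one_mul_apply_self, transpose_pow, hM, pow_add]

theorem sum_sum_range_pow_mul_single_one_mul_pow_apply_self (hM : Mᵀ = M) (k : ℕ) (a d : m) :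
    ∑ b : m, (∑ i ∈ range (k + 1), M ^ i * single b d (1 : α) * M ^ (k - i)) a b =
      (k + 1) * (M ^ k) a d := by
  simp_rw [sum_apply]
  rw [Finset.sum_comm]
  have hterm : ∀ i ∈ range (k + 1),
      ∑ b : m, (M ^ i * single b d (1 : α) * M ^ (k - i)) a b = (M ^ k) a d := fun i hi => by
    rw [sum_pow_mul_single_one_mul_pow_apply_self hM,
      Nat.add_sub_cancel' (mem_range_succ_iff.mp hi)]
  rw [sum_congr rfl hterm]
  simp

end Matrix

open Matrix Matrix.Norms.Operator in
theorem sum_matExpDeriv_single_apply_self (n : ℕ) {M : Matrix (Fin n) (Fin n) ℝ} (hM : Mᵀ = M)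
    (a d : Fin n) : ∑ b : Fin n, matExpDeriv n M (single b d (1 : ℝ)) a b = matExp n M a d := by
  -- the operator norm satisfies `‖1‖ = 1` only on a nonempty index type
  have : Nonempty (Fin n) := ⟨a⟩
  have hexp : HasSum (fun k => (((k.factorial : ℝ))⁻¹ • M ^ k) a d) (matExp n M a d) :=
    Pi.hasSum.mp (Pi.hasSum.mp (NormedSpace.expSeries_summable' M).hasSum a) d
  have hderiv : HasSum (fun k => ∑ b : Fin n, ((((k + 1).factorial : ℝ))⁻¹ •
      ∑ i ∈ range (k + 1), M ^ i * single b d (1 : ℝ) * M ^ (k - i)) a b)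
      (∑ b : Fin n, matExpDeriv n M (single b d (1 : ℝ)) a b) :=
    hasSum_sum fun b _ =>
      Pi.hasSum.mp (Pi.hasSum.mp (summable_expDeriv_series M (single b d 1)).hasSum a) b
  refine hderiv.unique ?_
  convert hexp using 2 with k
  simp only [Matrix.smul_apply, smul_eq_mul, ← mul_sum,
    sum_sum_range_pow_mul_single_one_mul_pow_apply_self hM, Nat.factorial_succ]
  push_cast
  field_simp

theorem matExp_deriv_magic_identity_general (n : ℕ)
    (M : Matrix (Fin n) (Fin n) ℝ) (hM : M.transpose = M)
    (V : Fin n → ℝ) (a : Fin n) :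
    ∑ b : Fin n, ∑ e : Fin n,
        matExpDeriv n M (Matrix.single b e (1 : ℝ)) a b * V e
      = (matExp n M).mulVec V a := by
  rw [Finset.sum_comm]
  simp only [← Finset.sum_mul, sum_matExpDeriv_single_apply_self n hM]
  rfl

/-- **Magic identity for the derivative of the matrix exponential at a symmetric
matrix**: for `M` symmetric and `V ∈ ℝ^n`, for every index `a`,
`∑_{b,d} (D exp(M)[E_{bd}])_{ab} V_d = (exp(M) V)_a`,
where `E_{bd}` is the elementary matrix with a single `1` at position `(b,d)`. -/
theorem matExp_deriv_magic_identity (n : ℕ) (hn : 1 ≤ n)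
    (M : Matrix (Fin n) (Fin n) ℝ) (hM : M.transpose = M)
    (V : Fin n → ℝ) (a : Fin n) :
    ∑ b : Fin n, ∑ e : Fin n,
        matExpDeriv n M (Matrix.single b e (1 : ℝ)) a b * V e
      = (matExp n M).mulVec V a :=
  matExp_deriv_magic_identity_general n M hM V a
end
end
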